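/- arXiv:1505.04536 — 8 statements merged into one kernel-verified Lean document; each statement's English description precedes it below -/
import Mathlib

section
/- Let $0<q_{\rm red}<1$, $C_{\rm stab}, C_{\rm red}>0$, and $0<\theta\le 1$. Suppose nonnegative reals $\eta_\ell(T)$, $\eta_\star(T)$ indexed by finite sets $\mathcal T_\ell$, $\mathcal T_\star$ and a distance $\delta\ge0$ satisfy: (stability) $|\eta_\star(\mathcal T_\ell\cap\mathcal T_\star)-\eta_\ell(\mathcal T_\ell\cap\mathcal T_\star)|\le C_{\rm stab}\,\delta$ where $\eta(\mathcal U):=(\sum_{T\in\mathcal U}\eta(T)^2)^{1/2}$; (reduction) $\eta_\star(\mathcal T_\star\setminus\mathcal T_\ell)^2\le q_{\rm red}\,\eta_\ell(\mathcal T_\ell\setminus\mathcal T_\star)^2+C_{\rm red}\,\delta^2$; and (Dörfler marking) $\theta\,\eta_\ell(\mathcal T_\ell)^2\le \eta_\ell(\mathcal T_\ell\setminus\mathcal T_\star)^2$. Then there exist constants $0<q_{\rm est}<1$ and $C_{\rm est}>0$, depending only on $q_{\rm red}$, $C_{\rm stab}$, $C_{\rm red}$, and $\theta$, such that $\eta_\star(\mathcal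 T_\star)^2\le q_{\rm est}\,\eta_\ell(\mathcal T_\ell)^2 + C_{\rm est}\,\delta^2$. Specifically, for sufficiently small $\delta'>0$ one may take $q_{\rm est}=(1+\delta')-(1+\delta'-q_{\rm red})\theta$ and $C_{\rm est}=C_{\rm stab}^2(1+1/\delta')+C_{\rm red}$. -/
/-!
The estimator on `Ts` splits into the part on the kept elements `Tl ∩ Ts` and the part on the
new elements `Ts \ Tl`. Stability and Young's inequality bound the first by
`(1 + δ') η_ℓ(Tl ∩ Ts)² + (1 + 1/δ') (C_stab δ)²`, reduction bounds the second by
`q_red η_ℓ(Tl \ Ts)² + C_red δ²`. Since `η_ℓ(Tl ∩ Ts)² = η_ℓ(Tl)² - η_ℓ(Tl \ Ts)²`, the refined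
elements enter with the net weight `-(1 + δ' - q_red)`, and Dörfler marking turns this into the
contraction factor `(1 + δ') - (1 + δ' - q_red) θ`, which lies in `(0, 1)` for
`δ' = (1 - q_red) θ / 2`.
-/

open Finset

lemma add_sq_le_one_add_mul_sq_add {a b ε : ℝ} (hε : 0 < ε) :
    (a + b) ^ 2 ≤ (1 + ε) * a ^ 2 + (1 + 1 / ε) * b ^ 2 := by
  have h : 2 * a * b ≤ ε * a ^ 2 + 1 / ε * b ^ 2 := by
    have hsq : 0 ≤ (ε * a - b) ^ 2 / ε := by positivity
    have expand : (ε * a - b) ^ 2 / ε = ε * a ^ 2 + 1 / ε * b ^ 2 - 2 * a * b := by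
      field_simp
      ring
    linarith
  nlinarith

lemma le_one_add_mul_add_of_sqrt_le_sqrt_add {x y c ε : ℝ} (hx : 0 ≤ x) (hy : 0 ≤ y)
    (hε : 0 < ε) (h : √x ≤ √y + c) :
    x ≤ (1 + ε) * y + (1 + 1 / ε) * c ^ 2 := by
  calc x = √x ^ 2 := (Real.sq_sqrt hx).symm
    _ ≤ (√y + c) ^ 2 := pow_le_pow_left₀ (Real.sqrt_nonneg x) h 2
    _ ≤ (1 + ε) * √y ^ 2 + (1 + 1 / ε) * c ^ 2 := add_sq_le_one_add_mul_sq_add hε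
    _ = (1 + ε) * y + (1 + 1 / ε) * c ^ 2 := by rw [Real.sq_sqrt hy]

lemma one_add_sub_mul_mem_Ioo {q θ : ℝ} (hq0 : 0 < q) (hq1 : q < 1) (hθ0 : 0 < θ)
    (hθ1 : θ ≤ 1) :
    (1 + (1 - q) * θ / 2) - (1 + (1 - q) * θ / 2 - q) * θ ∈ Set.Ioo 0 1 := by
  have h : (1 + (1 - q) * θ / 2) - (1 + (1 - q) * θ / 2 - q) * θ
      = 1 - (1 - q) * (θ * (1 + θ) / 2) := by ring
  have hθ : θ * (1 + θ) / 2 ≤ 1 := by nlinarith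
  rw [h]
  constructor <;> nlinarith [mul_pos (sub_pos.2 hq1) hθ0]

theorem stmt_0_general {α : Type*} [DecidableEq α] (Tl Ts : Finset α)
    (ηl ηs : α → ℝ)
    (δ : ℝ)
    (qred Cstab Cred θ : ℝ) (hq0 : 0 < qred) (hq1 : qred < 1)
    (hθ0 : 0 < θ) (hθ1 : θ ≤ 1)
    (stab : |Real.sqrt (∑ T ∈ Tl ∩ Ts, ηs T ^ 2) -
        Real.sqrt (∑ T ∈ Tl ∩ Ts, ηl T ^ 2)| ≤ Cstab * δ)
    (red : ∑ T ∈ Ts \ Tl, ηs T ^ 2 ≤ qred * ∑ T ∈ Tl \ Ts, ηl T ^ 2 + Cred * δ ^ 2)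
    (mark : θ * ∑ T ∈ Tl, ηl T ^ 2 ≤ ∑ T ∈ Tl \ Ts, ηl T ^ 2) :
    ∃ δ' > (0 : ℝ),
      (0 < (1 + δ') - (1 + δ' - qred) * θ) ∧ ((1 + δ') - (1 + δ' - qred) * θ < 1) ∧
      ∑ T ∈ Ts, ηs T ^ 2 ≤ ((1 + δ') - (1 + δ' - qred) * θ) * ∑ T ∈ Tl, ηl T ^ 2
        + (Cstab ^ 2 * (1 + 1 / δ') + Cred) * δ ^ 2 := by
  set δ' := (1 - qred) * θ / 2
  have hδ' : 0 < δ' := by have := mul_pos (sub_pos.2 hq1) hθ0; positivity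
  obtain ⟨hqest0, hqest1⟩ := one_add_sub_mul_mem_Ioo hq0 hq1 hθ0 hθ1
  refine ⟨δ', hδ', hqest0, hqest1, ?_⟩
  have kept : ∑ T ∈ Tl ∩ Ts, ηs T ^ 2
      ≤ (1 + δ') * ∑ T ∈ Tl ∩ Ts, ηl T ^ 2 + (1 + 1 / δ') * (Cstab * δ) ^ 2 :=
    le_one_add_mul_add_of_sqrt_le_sqrt_add (sum_nonneg fun _ _ ↦ sq_nonneg _)
      (sum_nonneg fun _ _ ↦ sq_nonneg _) hδ' (sub_le_iff_le_add'.1 ((le_abs_self _).trans stab))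
  have weight : 0 ≤ 1 + δ' - qred := by linarith
  calc ∑ T ∈ Ts, ηs T ^ 2 = ∑ T ∈ Tl ∩ Ts, ηs T ^ 2 + ∑ T ∈ Ts \ Tl, ηs T ^ 2 := by
        rw [inter_comm, sum_inter_add_sum_sdiff]
    _ ≤ ((1 + δ') * ∑ T ∈ Tl ∩ Ts, ηl T ^ 2 + (1 + 1 / δ') * (Cstab * δ) ^ 2)
        + (qred * ∑ T ∈ Tl \ Ts, ηl T ^ 2 + Cred * δ ^ 2) := add_le_add kept red
    _ = (1 + δ') * ∑ T ∈ Tl, ηl T ^ 2 - (1 + δ' - qred) * ∑ T ∈ Tl \ Ts, ηl T ^ 2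
        + (Cstab ^ 2 * (1 + 1 / δ') + Cred) * δ ^ 2 := by
        rw [← sum_inter_add_sum_sdiff Tl Ts]
        ring
    _ ≤ (1 + δ') * ∑ T ∈ Tl, ηl T ^ 2 - (1 + δ' - qred) * (θ * ∑ T ∈ Tl, ηl T ^ 2)
        + (Cstab ^ 2 * (1 + 1 / δ') + Cred) * δ ^ 2 := by
        linarith [mul_le_mul_of_nonneg_left mark weight]
    _ = ((1 + δ') - (1 + δ' - qred) * θ) * ∑ T ∈ Tl, ηl T ^ 2
        + (Cstab ^ 2 * (1 + 1 / δ') + Cred) * δ ^ 2 := by ring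

/-- Generalized estimator reduction (Lemma 3.3). -/
theorem stmt_0 {α : Type*} [DecidableEq α] (Tl Ts : Finset α)
    (ηl ηs : α → ℝ) (hηl : ∀ T, 0 ≤ ηl T) (hηs : ∀ T, 0 ≤ ηs T)
    (δ : ℝ) (hδ : 0 ≤ δ)
    (qred Cstab Cred θ : ℝ) (hq0 : 0 < qred) (hq1 : qred < 1)
    (hCs : 0 < Cstab) (hCr : 0 < Cred) (hθ0 : 0 < θ) (hθ1 : θ ≤ 1)
    (stab : |Real.sqrt (∑ T ∈ Tl ∩ Ts, ηs T ^ 2) -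
        Real.sqrt (∑ T ∈ Tl ∩ Ts, ηl T ^ 2)| ≤ Cstab * δ)
    (red : ∑ T ∈ Ts \ Tl, ηs T ^ 2 ≤ qred * ∑ T ∈ Tl \ Ts, ηl T ^ 2 + Cred * δ ^ 2)
    (mark : θ * ∑ T ∈ Tl, ηl T ^ 2 ≤ ∑ T ∈ Tl \ Ts, ηl T ^ 2) :
    ∃ δ' > (0 : ℝ),
      (0 < (1 + δ') - (1 + δ' - qred) * θ) ∧ ((1 + δ') - (1 + δ' - qred) * θ < 1) ∧
      ∑ T ∈ Ts, ηs T ^ 2 ≤ ((1 + δ') - (1 + δ' - qred) * θ) * ∑ T ∈ Tl, ηl T ^ 2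
        + (Cstab ^ 2 * (1 + 1 / δ') + Cred) * δ ^ 2 :=
  stmt_0_general Tl Ts ηl ηs δ qred Cstab Cred θ hq0 hq1 hθ0 hθ1 stab red mark
end

section
/- Let $(a_j)_{j\ge 0}$ be nonnegative reals, $0<q_{\rm est}<1$, $C_{\rm est}>0$, and $(d_j)_{j\ge0}$ nonnegative reals satisfying: (i) $a_{j+1} \le q_{\rm est}\, a_j + C_{\rm est}\, d_j$ for all $j$; and (ii) for every $\varepsilon>0$ there exists $C_{\rm orth}(\varepsilon)>0$ such that $\sum_{j=n}^{N}(d_j - \varepsilon a_j) \le C_{\rm orth}(\varepsilon)\, a_n$ for all $n\le N$. Then there exist $C_{\rm lin}>0$ and $0<q_{\rm lin}<1$, depending only on $q_{\rm est}$, $C_{\rm est}$, and $C_{\rm orth}(\cdot)$, such that $a_{n+k} \le C_{\rm lin}\, q_{\rm lin}^{k}\, a_n$ for all $n,k\in\mathbb N_0$. -/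
/-!
Summing the estimator reduction over `j = n, …, N` and inserting quasi-orthogonality with
`ε = (1 - q_est) / (2 C_est)` absorbs the `ε`-part of the distances into the left-hand side, which
gives uniform summability `∑_{j=n}^N a_j ≤ M a_n`. Uniform summability forces the tails
`T_m = ∑_{j=m}^N a_j` to contract, `T_{m+1} = T_m - a_m ≤ (1 - 1/M) T_m`, and
`a_{n+k} ≤ T_{n+k}` then decays like `(1 - 1/M)^k`.
-/

open Finset

namespace Finset

lemma sum_Icc_eq_add_sum_Icc_succ {M : Type*} [AddCommMonoid M] (f : ℕ → M) {m N : ℕ}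
    (h : m ≤ N) : ∑ j ∈ Icc m N, f j = f m + ∑ j ∈ Icc (m + 1) N, f j := by
  rw [Icc_eq_cons_Ioc h, sum_cons, Icc_add_one_left_eq_Ioc]

lemma sum_Icc_succ_shift {M : Type*} [AddCommMonoid M] (f : ℕ → M) (m N : ℕ) :
    ∑ j ∈ Icc m N, f (j + 1) = ∑ j ∈ Icc (m + 1) (N + 1), f j := by
  rw [← map_add_right_Icc m N 1, sum_map]
  rfl

end Finset

variable {a : ℕ → ℝ}

lemma sum_Icc_le_of_reduction_of_quasiOrthogonal {d : ℕ → ℝ} (ha : ∀ j, 0 ≤ a j)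
    {q C ε Corth : ℝ} (hC : 0 ≤ C) (hκ : 0 < 1 - (q + C * ε))
    (hred : ∀ j, a (j + 1) ≤ q * a j + C * d j)
    (horth : ∀ n N, n ≤ N → ∑ j ∈ Icc n N, (d j - ε * a j) ≤ Corth * a n)
    {n N : ℕ} (hnN : n ≤ N) :
    ∑ j ∈ Icc n N, a j ≤ (1 + C * Corth) / (1 - (q + C * ε)) * a n := by
  set S := ∑ j ∈ Icc n N, a j
  have hshift : S ≤ a n + ∑ j ∈ Icc n N, a (j + 1) := by
    rw [sum_Icc_succ_shift, ← sum_Icc_eq_add_sum_Icc_succ a (by omega : n ≤ N + 1)]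
    exact sum_le_sum_of_subset_of_nonneg (Icc_subset_Icc_right N.le_succ) fun j _ _ => ha j
  have hreduce : ∑ j ∈ Icc n N, a (j + 1) ≤ q * S + C * ∑ j ∈ Icc n N, d j := by
    rw [mul_sum, mul_sum, ← sum_add_distrib]
    exact sum_le_sum fun j _ => hred j
  have hdist : ∑ j ∈ Icc n N, d j ≤ ε * S + Corth * a n := by
    have := horth n N hnN
    rw [sum_sub_distrib, ← mul_sum] at this
    linarith
  rw [div_mul_eq_mul_div, le_div_iff₀ hκ]
  linarith [mul_le_mul_of_nonneg_left hdist hC]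

lemma le_mul_pow_mul_of_sum_Icc_le (ha : ∀ j, 0 ≤ a j) {M : ℝ} (hM : 1 ≤ M)
    (hsum : ∀ n N, n ≤ N → ∑ j ∈ Icc n N, a j ≤ M * a n) (n k : ℕ) :
    a (n + k) ≤ M * (1 - M⁻¹) ^ k * a n := by
  have hM₀ : 0 < M := by linarith
  have hq : 0 ≤ 1 - M⁻¹ := sub_nonneg.2 (inv_le_one_of_one_le₀ hM)
  have tail_contract :
      ∀ m N, ∑ j ∈ Icc (m + 1) N, a j ≤ (1 - M⁻¹) * ∑ j ∈ Icc m N, a j := by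
    intro m N
    rcases le_or_gt m N with hmN | hNm
    · have hsplit := sum_Icc_eq_add_sum_Icc_succ a hmN
      have hlower : M⁻¹ * ∑ j ∈ Icc m N, a j ≤ a m := by
        rw [inv_mul_le_iff₀ hM₀]
        exact hsum m N hmN
      linarith
    · rw [Icc_eq_empty (by omega), sum_empty]
      exact mul_nonneg hq (sum_nonneg fun j _ => ha j)
  have decay := le_geom (u := fun i => ∑ j ∈ Icc (n + i) (n + k), a j) hq k
    fun i _ => tail_contract (n + i) (n + k)
  simp only [Icc_self, sum_singleton, add_zero] at decay
  calc a (n + k) ≤ (1 - M⁻¹) ^ k * ∑ j ∈ Icc n (n + k), a j := decay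
    _ ≤ (1 - M⁻¹) ^ k * (M * a n) := by gcongr; exact hsum n (n + k) (by omega)
    _ = M * (1 - M⁻¹) ^ k * a n := by ring

theorem stmt_2_general (a d : ℕ → ℝ) (ha : ∀ j, 0 ≤ a j)
    (qest Cest : ℝ) (hq1 : qest < 1) (hC : 0 < Cest)
    (hred : ∀ j, a (j + 1) ≤ qest * a j + Cest * d j)
    (horth : ∀ ε : ℝ, 0 < ε → ∃ Corth : ℝ, 0 < Corth ∧
      ∀ n N : ℕ, n ≤ N → ∑ j ∈ Finset.Icc n N, (d j - ε * a j) ≤ Corth * a n) :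
    ∃ Clin qlin : ℝ, 0 < Clin ∧ 0 < qlin ∧ qlin < 1 ∧
      ∀ n k : ℕ, a (n + k) ≤ Clin * qlin ^ k * a n := by
  obtain ⟨Corth, -, hCorth⟩ := horth ((1 - qest) / (2 * Cest)) (by apply div_pos <;> linarith)
  have hκ : 1 - (qest + Cest * ((1 - qest) / (2 * Cest))) = (1 - qest) / 2 := by
    field_simp
    ring
  set M := max ((1 + Cest * Corth) / ((1 - qest) / 2)) 2
  have hM : 2 ≤ M := le_max_right _ _
  have hsum : ∀ n N, n ≤ N → ∑ j ∈ Icc n N, a j ≤ M * a n := fun n N hnN =>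
    calc ∑ j ∈ Icc n N, a j ≤ (1 + Cest * Corth) / ((1 - qest) / 2) * a n := by
          rw [← hκ]
          exact sum_Icc_le_of_reduction_of_quasiOrthogonal ha hC.le (by rw [hκ]; linarith)
            hred hCorth hnN
      _ ≤ M * a n := mul_le_mul_of_nonneg_right (le_max_left _ _) (ha n)
  refine ⟨M, 1 - M⁻¹, by linarith, ?_, ?_,
    le_mul_pow_mul_of_sum_Icc_le ha (by linarith) hsum⟩
  · have : M⁻¹ < 1 := inv_lt_one_of_one_lt₀ (by linarith)
    linarith
  · have : 0 < M⁻¹ := by positivity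
    linarith

/-- Generalized linear convergence (Proposition 3.4), abstract form. -/
theorem stmt_2 (a d : ℕ → ℝ) (ha : ∀ j, 0 ≤ a j) (hd : ∀ j, 0 ≤ d j)
    (qest Cest : ℝ) (hq0 : 0 < qest) (hq1 : qest < 1) (hC : 0 < Cest)
    (hred : ∀ j, a (j + 1) ≤ qest * a j + Cest * d j)
    (horth : ∀ ε : ℝ, 0 < ε → ∃ Corth : ℝ, 0 < Corth ∧
      ∀ n N : ℕ, n ≤ N → ∑ j ∈ Finset.Icc n N, (d j - ε * a j) ≤ Corth * a n) :
    ∃ Clin qlin : ℝ, 0 < Clin ∧ 0 < qlin ∧ qlin < 1 ∧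
      ∀ n k : ℕ, a (n + k) ≤ Clin * qlin ^ k * a n :=
  stmt_2_general a d ha qest Cest hq1 hC hred horth
end

section
/- Let $\mathcal T_\ell$ be a finite set, $\eta_u,\eta_z:\mathcal T_\ell\to\mathbb R_{\ge0}$, and set $E_u^2=\sum_{T\in\mathcal T_\ell}\eta_u(T)^2$, $E_z^2=\sum_{T\in\mathcal T_\ell}\eta_z(T)^2$, and $\rho(T)^2:=\eta_u(T)^2 E_z^2+E_u^2\eta_z(T)^2$. If a subset $\mathcal M\subseteq\mathcal T_\ell$ satisfies the combined Dörfler marking $\theta\sum_{T\in\mathcal T_\ell}\rho(T)^2 \le \sum_{T\in\mathcal M}\rho(T)^2$ for some $0<\theta\le1$, then $\theta\, E_u^2 \le \sum_{T\in\mathcal M}\eta_u(T)^2$ or $\theta\, E_z^2 \le \sum_{T\in\mathcal M}\eta_z(T)^2$, i.e., the set $\mathcal M$ satisfies the separate Dörfler marking for at least one of the two estimators. -/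
/-!
Summed over any set of elements, `ρ²` splits as `(∑ ηu²) E_z² + E_u² (∑ ηz²)`, which over all of
`T_ℓ` equals `2 E_u² E_z²`. If both separate markings failed on `M`, each of the two terms over `M`
would fall strictly short of `θ E_u² E_z²`, contradicting the combined marking.
-/

open Finset

theorem le_or_le_of_mul_two_mul_le_mul_add_mul {R : Type*} [CommRing R] [LinearOrder R]
    [IsStrictOrderedRing R] {A B a b θ : R} (hA : 0 ≤ A) (hB : 0 ≤ B) (ha : 0 ≤ a)
    (h : θ * (2 * (A * B)) ≤ a * B + A * b) :
    θ * A ≤ a ∨ θ * B ≤ b := by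
  by_contra! hlt
  obtain ⟨hua, hub⟩ := hlt
  rcases hA.eq_or_lt with rfl | hA
  · rw [mul_zero] at hua
    exact hua.not_ge ha
  rcases hB.eq_or_lt with rfl | hB
  · rw [mul_zero] at hub
    nlinarith
  nlinarith [mul_lt_mul_of_pos_right hua hB, mul_lt_mul_of_pos_left hub hA]

theorem stmt_4_general {α : Type*} (Tl : Finset α) (ηu ηz : α → ℝ) (θ : ℝ) (M : Finset α)
    (hmark : θ * ∑ T ∈ Tl, (ηu T ^ 2 * (∑ S ∈ Tl, ηz S ^ 2) + (∑ S ∈ Tl, ηu S ^ 2) * ηz T ^ 2)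
      ≤ ∑ T ∈ M, (ηu T ^ 2 * (∑ S ∈ Tl, ηz S ^ 2) + (∑ S ∈ Tl, ηu S ^ 2) * ηz T ^ 2)) :
    θ * ∑ T ∈ Tl, ηu T ^ 2 ≤ ∑ T ∈ M, ηu T ^ 2 ∨
    θ * ∑ T ∈ Tl, ηz T ^ 2 ≤ ∑ T ∈ M, ηz T ^ 2 := by
  have hsplit (s : Finset α) (B A : ℝ) :
      ∑ T ∈ s, (ηu T ^ 2 * B + A * ηz T ^ 2) =
        (∑ T ∈ s, ηu T ^ 2) * B + A * ∑ T ∈ s, ηz T ^ 2 := by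
    rw [sum_add_distrib, sum_mul, mul_sum]
  rw [hsplit, hsplit] at hmark
  refine le_or_le_of_mul_two_mul_le_mul_add_mul (by positivity) (by positivity) (by positivity) ?_
  linarith

/-- Combined Dörfler marking implies separate Dörfler marking for one estimator. -/
theorem stmt_4 {α : Type*} (Tl : Finset α) (ηu ηz : α → ℝ)
    (hηu : ∀ T, 0 ≤ ηu T) (hηz : ∀ T, 0 ≤ ηz T)
    (θ : ℝ) (hθ0 : 0 < θ) (hθ1 : θ ≤ 1)
    (M : Finset α) (hM : M ⊆ Tl)
    (hmark : θ * ∑ T ∈ Tl, (ηu T ^ 2 * (∑ S ∈ Tl, ηz S ^ 2) + (∑ S ∈ Tl, ηu S ^ 2) * ηz T ^ 2)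
      ≤ ∑ T ∈ M, (ηu T ^ 2 * (∑ S ∈ Tl, ηz S ^ 2) + (∑ S ∈ Tl, ηu S ^ 2) * ηz T ^ 2)) :
    θ * ∑ T ∈ Tl, ηu T ^ 2 ≤ ∑ T ∈ M, ηu T ^ 2 ∨
    θ * ∑ T ∈ Tl, ηz T ^ 2 ≤ ∑ T ∈ M, ηz T ^ 2 :=
  stmt_4_general Tl ηu ηz θ M hmark
end

section
/- Conversely to the previous statement: let $0<\theta\le 1$ and suppose a subset $\mathcal R\subseteq\mathcal T_\ell$ satisfies $2\theta\,E_u^2\le\sum_{T\in\mathcal R}\eta_u(T)^2$ or $2\theta\,E_z^2\le\sum_{T\in\mathcal R}\eta_z(T)^2$, where $E_u^2=\sum_{T\in\mathcal T_\ell}\eta_u(T)^2$ and $E_z^2=\sum_{T\in\mathcal T_\ell}\eta_z(T)^2$. Then with $\rho(T)^2:=\eta_u(T)^2E_z^2+E_u^2\eta_z(T)^2$ it holds $\theta\sum_{T\in\mathcal T_\ell}\rho(T)^2 \le \sum_{T\in\mathcal R}\rho(T)^2$, i.e., the separate Dörfler marking with parameter $2\theta$ for one estimator implies the combined Dörfler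 marking with parameter $\theta$. -/
/-!
Summing $\rho(T)^2 = \eta_u(T)^2 E_z^2 + E_u^2 \eta_z(T)^2$ over $\mathcal T_\ell$ gives $2E_u^2E_z^2$,
while summing over $\mathcal R$ gives
$(\sum_{\mathcal R}\eta_u^2)E_z^2 + E_u^2(\sum_{\mathcal R}\eta_z^2)$. If the $\eta_u$-marking holds,
the first summand alone is at least $2\theta E_u^2 E_z^2$ and the second is nonnegative;
the $\eta_z$-case is symmetric.
-/

open Finset

section

variable {α K : Type*} [CommSemiring K]

/-- The paper's `ρ(T)^2`, with `f = η_u^2` and `g = η_z^2`. -/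
def combinedSq (s : Finset α) (f g : α → K) (T : α) : K :=
  f T * ∑ S ∈ s, g S + (∑ S ∈ s, f S) * g T

theorem combinedSq_comm (s : Finset α) (f g : α → K) (T : α) :
    combinedSq s g f T = combinedSq s f g T := by
  unfold combinedSq
  ring

theorem sum_combinedSq (s R : Finset α) (f g : α → K) :
    ∑ T ∈ R, combinedSq s f g T =
      (∑ T ∈ R, f T) * ∑ S ∈ s, g S + (∑ S ∈ s, f S) * ∑ T ∈ R, g T := by
  simp only [combinedSq, sum_add_distrib, ← sum_mul, ← mul_sum]

theorem sum_combinedSq_self (s : Finset α) (f g : α → K) :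
    ∑ T ∈ s, combinedSq s f g T = 2 * ((∑ S ∈ s, f S) * ∑ S ∈ s, g S) := by
  rw [sum_combinedSq]
  ring

variable [PartialOrder K] [IsOrderedRing K]

def IsDorflerMarking (θ : K) (s R : Finset α) (f : α → K) : Prop :=
  θ * ∑ T ∈ s, f T ≤ ∑ T ∈ R, f T

theorem isDorflerMarking_combinedSq_of_left {θ : K} {s R : Finset α} {f g : α → K}
    (hf : ∀ T, 0 ≤ f T) (hg : ∀ T, 0 ≤ g T) (h : IsDorflerMarking (2 * θ) s R f) :
    IsDorflerMarking θ s R (combinedSq s f g) := by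
  have hG : 0 ≤ ∑ S ∈ s, g S := sum_nonneg fun T _ => hg T
  have hcross : 0 ≤ (∑ S ∈ s, f S) * ∑ T ∈ R, g T :=
    mul_nonneg (sum_nonneg fun T _ => hf T) (sum_nonneg fun T _ => hg T)
  calc θ * ∑ T ∈ s, combinedSq s f g T
      = 2 * θ * (∑ S ∈ s, f S) * ∑ S ∈ s, g S := by rw [sum_combinedSq_self]; ring
    _ ≤ (∑ T ∈ R, f T) * ∑ S ∈ s, g S := mul_le_mul_of_nonneg_right h hG
    _ ≤ ∑ T ∈ R, combinedSq s f g T := by rw [sum_combinedSq]; exact le_add_of_nonneg_right hcross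

theorem isDorflerMarking_combinedSq_of_right {θ : K} {s R : Finset α} {f g : α → K}
    (hf : ∀ T, 0 ≤ f T) (hg : ∀ T, 0 ≤ g T) (h : IsDorflerMarking (2 * θ) s R g) :
    IsDorflerMarking θ s R (combinedSq s f g) := by
  have := isDorflerMarking_combinedSq_of_left hg hf h
  simpa only [IsDorflerMarking, combinedSq_comm] using this

end

theorem stmt_5_general {α : Type*} (Tl : Finset α) (ηu ηz : α → ℝ)
    (θ : ℝ)
    (R : Finset α)
    (hsep : 2 * θ * ∑ T ∈ Tl, ηu T ^ 2 ≤ ∑ T ∈ R, ηu T ^ 2 ∨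
      2 * θ * ∑ T ∈ Tl, ηz T ^ 2 ≤ ∑ T ∈ R, ηz T ^ 2) :
    θ * ∑ T ∈ Tl, (ηu T ^ 2 * (∑ S ∈ Tl, ηz S ^ 2) + (∑ S ∈ Tl, ηu S ^ 2) * ηz T ^ 2)
      ≤ ∑ T ∈ R, (ηu T ^ 2 * (∑ S ∈ Tl, ηz S ^ 2) + (∑ S ∈ Tl, ηu S ^ 2) * ηz T ^ 2) := by
  have hu : ∀ T, 0 ≤ ηu T ^ 2 := fun T => sq_nonneg _
  have hz : ∀ T, 0 ≤ ηz T ^ 2 := fun T => sq_nonneg _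
  exact hsep.elim (isDorflerMarking_combinedSq_of_left hu hz)
    (isDorflerMarking_combinedSq_of_right hu hz)

/-- Separate Dörfler marking with parameter 2θ implies combined Dörfler marking with θ. -/
theorem stmt_5 {α : Type*} (Tl : Finset α) (ηu ηz : α → ℝ)
    (hηu : ∀ T, 0 ≤ ηu T) (hηz : ∀ T, 0 ≤ ηz T)
    (θ : ℝ) (hθ0 : 0 < θ) (hθ1 : θ ≤ 1)
    (R : Finset α) (hR : R ⊆ Tl)
    (hsep : 2 * θ * ∑ T ∈ Tl, ηu T ^ 2 ≤ ∑ T ∈ R, ηu T ^ 2 ∨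
      2 * θ * ∑ T ∈ Tl, ηz T ^ 2 ≤ ∑ T ∈ R, ηz T ^ 2) :
    θ * ∑ T ∈ Tl, (ηu T ^ 2 * (∑ S ∈ Tl, ηz S ^ 2) + (∑ S ∈ Tl, ηu S ^ 2) * ηz T ^ 2)
      ≤ ∑ T ∈ R, (ηu T ^ 2 * (∑ S ∈ Tl, ηz S ^ 2) + (∑ S ∈ Tl, ηu S ^ 2) * ηz T ^ 2) :=
  stmt_5_general Tl ηu ηz θ R hsep
end

section
/- Let $(b_\ell)_{\ell\ge0}$ and $(m_\ell)_{\ell\ge0}$ be positive reals and $(N_\ell)_{\ell\ge0}$ nonnegative reals. Suppose: (i) linear convergence $b_\ell\le C_{\rm lin} q_{\rm lin}^{\ell-j} b_j$ for all $j\le\ell$ with $C_{\rm lin}>0$, $0<q_{\rm lin}<1$; (ii) a mesh-closure estimate $N_\ell \le C_{\rm nvb}\sum_{j=0}^{\ell-1} m_j$ with $C_{\rm nvb}>0$; and (iii) a cardinality bound $m_j \le C_1\, (C_2\, A)^{1/r}\, b_j^{-1/r}$ for all $j$, with constants $C_1,C_2,A>0$ and rate $r>0$. Then $b_\ell \le \Big(\frac{C_{\rm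 nvb} C_1}{1-q_{\rm lin}^{1/r}}\Big)^{r}\, C_{\rm lin}\, C_2\, A\, N_\ell^{-r}$ for all $\ell$ with $N_\ell>0$. -/
/-!
Linear convergence makes `b_j^{-1/r}` grow geometrically in `j`, so the sum of these over the
history `j < ℓ` is at most `C_lin^{1/r} / (1 - q_lin^{1/r})` times its last term `b_ℓ^{-1/r}`.
Closure and the cardinality bound then give `N_ℓ ≲ b_ℓ^{-1/r}`, which is solved for `b_ℓ`.
-/

open Finset Real

lemma rpow_neg_le_mul_rpow_neg {x y c s : ℝ} (hx : 0 < x) (hy : 0 < y) (hc : 0 ≤ c)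
    (hs : 0 ≤ s) (h : y ≤ c * x) : x ^ (-s) ≤ c ^ s * y ^ (-s) := by
  have hys : y ^ s ≤ c ^ s * x ^ s := by
    rw [← mul_rpow hc hx.le]
    exact rpow_le_rpow hy.le h hs
  rw [rpow_neg hx.le, rpow_neg hy.le, ← div_eq_mul_inv, le_div_iff₀ (rpow_pos_of_pos hy s),
    inv_mul_le_iff₀ (rpow_pos_of_pos hx s), mul_comm]
  exact hys

lemma sum_range_pow_sub_le {q : ℝ} (hq0 : 0 ≤ q) (hq1 : q < 1) (ℓ : ℕ) :
    ∑ j ∈ range ℓ, q ^ (ℓ - j) ≤ 1 / (1 - q) := calc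
  ∑ j ∈ range ℓ, q ^ (ℓ - j) ≤ ∑ j ∈ range (ℓ + 1), q ^ (ℓ - j) :=
    sum_le_sum_of_subset_of_nonneg (range_subset_range.2 ℓ.le_succ) fun _ _ _ ↦ by positivity
  _ = ∑ j ∈ range (ℓ + 1), q ^ j := sum_range_reflect (q ^ ·) (ℓ + 1)
  _ ≤ q ^ 0 / (1 - q) := by rw [← Nat.Ico_zero_eq_range]; exact geom_sum_Ico_le_of_lt_one hq0 hq1
  _ = 1 / (1 - q) := by rw [pow_zero]

lemma sum_rpow_neg_le_of_linear_convergence {b : ℕ → ℝ} {C q s : ℝ} (hb : ∀ ℓ, 0 < b ℓ)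
    (hC : 0 ≤ C) (hq0 : 0 ≤ q) (hq1 : q < 1) (hs : 0 < s)
    (hlin : ∀ j ℓ : ℕ, j ≤ ℓ → b ℓ ≤ C * q ^ (ℓ - j) * b j) (ℓ : ℕ) :
    ∑ j ∈ range ℓ, b j ^ (-s) ≤ C ^ s / (1 - q ^ s) * b ℓ ^ (-s) := by
  have hqs0 : 0 ≤ q ^ s := rpow_nonneg hq0 s
  have hqs1 : q ^ s < 1 := rpow_lt_one hq0 hq1 hs
  calc ∑ j ∈ range ℓ, b j ^ (-s)
      ≤ ∑ j ∈ range ℓ, C ^ s * b ℓ ^ (-s) * (q ^ s) ^ (ℓ - j) := by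
        refine sum_le_sum fun j hj ↦ ?_
        have := rpow_neg_le_mul_rpow_neg (hb j) (hb ℓ) (by positivity) hs.le
          (hlin j ℓ (mem_range.1 hj).le)
        rwa [mul_rpow hC (by positivity), ← rpow_pow_comm hq0, mul_right_comm] at this
    _ = C ^ s * b ℓ ^ (-s) * ∑ j ∈ range ℓ, (q ^ s) ^ (ℓ - j) := (mul_sum ..).symm
    _ ≤ C ^ s * b ℓ ^ (-s) * (1 / (1 - q ^ s)) :=
        mul_le_mul_of_nonneg_left (sum_range_pow_sub_le hqs0 hqs1 ℓ)
          (mul_nonneg (rpow_nonneg hC s) (rpow_pos_of_pos (hb ℓ) _).le)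
    _ = C ^ s / (1 - q ^ s) * b ℓ ^ (-s) := by ring

lemma le_mul_rpow_neg_of_le_mul_rpow_neg_one_div {x y K r : ℝ} (hx : 0 < x) (hy : 0 < y)
    (hr : 0 < r) (h : y ≤ K * x ^ (-(1 / r))) : x ≤ K ^ r * y ^ (-r) := by
  have hK : 0 < K := pos_of_mul_pos_left (hy.trans_le h) (rpow_pos_of_pos hx _).le
  have hyr : y ^ r ≤ K ^ r * x⁻¹ := by
    calc y ^ r ≤ (K * x ^ (-(1 / r))) ^ r := rpow_le_rpow hy.le h hr.le
      _ = K ^ r * x⁻¹ := by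
        rw [mul_rpow hK.le (by positivity), ← rpow_mul hx.le, neg_mul, one_div,
          inv_mul_cancel₀ hr.ne', rpow_neg_one]
  rw [rpow_neg hy.le, ← div_eq_mul_inv, le_div_iff₀ (by positivity)]
  rw [← div_eq_mul_inv, le_div_iff₀ hx] at hyr
  linarith

theorem stmt_7_general (b m : ℕ → ℝ) (N : ℕ → ℝ) (hb : ∀ ℓ, 0 < b ℓ)
    (Clin qlin Cnvb C1 C2 A r : ℝ)
    (hClin : 0 < Clin) (hq0 : 0 < qlin) (hq1 : qlin < 1) (hCnvb : 0 < Cnvb)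
    (hC1 : 0 < C1) (hC2 : 0 < C2) (hA : 0 < A) (hr : 0 < r)
    (hlin : ∀ j ℓ : ℕ, j ≤ ℓ → b ℓ ≤ Clin * qlin ^ (ℓ - j) * b j)
    (hclosure : ∀ ℓ : ℕ, N ℓ ≤ Cnvb * ∑ j ∈ Finset.range ℓ, m j)
    (hcard : ∀ j : ℕ, m j ≤ C1 * (C2 * A) ^ (1 / r) * (b j) ^ (-(1 / r))) :
    ∀ ℓ : ℕ, 0 < N ℓ →
      b ℓ ≤ (Cnvb * C1 / (1 - qlin ^ (1 / r))) ^ r * Clin * C2 * A * (N ℓ) ^ (-r) := by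
  intro ℓ hNℓ
  set s := 1 / r with hs
  have hQ : qlin ^ s < 1 := rpow_lt_one hq0.le hq1 (by positivity)
  have hN : N ℓ ≤ (Cnvb * C1 / (1 - qlin ^ s) * (Clin * (C2 * A)) ^ s) * b ℓ ^ (-s) := calc
    N ℓ ≤ Cnvb * ∑ j ∈ range ℓ, C1 * (C2 * A) ^ s * b j ^ (-s) :=
      (hclosure ℓ).trans (by gcongr with j; exact hcard j)
    _ = Cnvb * C1 * (C2 * A) ^ s * ∑ j ∈ range ℓ, b j ^ (-s) := by rw [← mul_sum]; ring
    _ ≤ Cnvb * C1 * (C2 * A) ^ s * (Clin ^ s / (1 - qlin ^ s) * b ℓ ^ (-s)) := by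
      gcongr
      exact sum_rpow_neg_le_of_linear_convergence hb hClin.le hq0.le hq1 (by positivity) hlin ℓ
    _ = _ := by rw [mul_rpow hClin.le (by positivity)]; ring
  have hK : (Cnvb * C1 / (1 - qlin ^ s) * (Clin * (C2 * A)) ^ s) ^ r
      = (Cnvb * C1 / (1 - qlin ^ s)) ^ r * (Clin * C2 * A) := by
    rw [mul_rpow (div_nonneg (by positivity) (by linarith)) (by positivity),
      ← rpow_mul (by positivity), hs, one_div_mul_cancel hr.ne', rpow_one, mul_assoc Clin]
  have := le_mul_rpow_neg_of_le_mul_rpow_neg_one_div (hb ℓ) hNℓ hr hN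
  rwa [hK, ← mul_assoc, ← mul_assoc] at this

/-- Final step in the proof of optimal convergence rates (Theorem 3.1). -/
theorem stmt_7 (b m : ℕ → ℝ) (N : ℕ → ℝ) (hb : ∀ ℓ, 0 < b ℓ) (hm : ∀ ℓ, 0 < m ℓ)
    (hN : ∀ ℓ, 0 ≤ N ℓ)
    (Clin qlin Cnvb C1 C2 A r : ℝ)
    (hClin : 0 < Clin) (hq0 : 0 < qlin) (hq1 : qlin < 1) (hCnvb : 0 < Cnvb)
    (hC1 : 0 < C1) (hC2 : 0 < C2) (hA : 0 < A) (hr : 0 < r)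
    (hlin : ∀ j ℓ : ℕ, j ≤ ℓ → b ℓ ≤ Clin * qlin ^ (ℓ - j) * b j)
    (hclosure : ∀ ℓ : ℕ, N ℓ ≤ Cnvb * ∑ j ∈ Finset.range ℓ, m j)
    (hcard : ∀ j : ℕ, m j ≤ C1 * (C2 * A) ^ (1 / r) * (b j) ^ (-(1 / r))) :
    ∀ ℓ : ℕ, 0 < N ℓ →
      b ℓ ≤ (Cnvb * C1 / (1 - qlin ^ (1 / r))) ^ r * Clin * C2 * A * (N ℓ) ^ (-r) :=
  stmt_7_general b m N hb Clin qlin Cnvb C1 C2 A r hClin hq0 hq1 hCnvb hC1 hC2 hA hr hlin hclosure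
    hcard
end

section
/- Let $(a_j)$, $(D_j)$ be nonnegative real sequences, $\delta\in(0,1)$, $C_{\rm rel}>0$, $C_{\rm mon}\ge1$, and $j_\delta\in\mathbb N$. Assume: (i) $d_j \le \frac{1}{1-\delta}D_j - D_{j+1}$ for all $j\ge j_\delta$, where $(d_j)$ are nonnegative reals; (ii) $D_j \le C_{\rm rel}^2\, a_j$ for all $j$; (iii) $d_j \le C_{\rm rel}^2\, a_j$ for all $j$ (from the triangle-type bound $d_j\le D_j$ plus (ii), or directly); (iv) quasi-monotonicity $a_j \le C_{\rm mon}\, a_n$ for all $j\ge n$. Set $\varepsilon:=C_{\rm rel}^2(\frac{1}{1-\delta}-1)$. Then for all $n\le N$: $\sum_{j=n}^{N}\big(d_j - \varepsilon\, a_j\big) \le (1+j_\delta)\,C_{\rm rel}^2\, C_{\rm mon}\, a_n$. -/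
/-!
For `j ≥ jδ` the reliability bound `D j ≤ Crel² a j` absorbs the excess `(1/(1-δ) - 1) D j` of
the quasi-orthogonality estimate into `ε a j`, so the summand is dominated by `D j - D (j+1)`,
and this part of the sum telescopes to at most `D (max n jδ) ≤ Crel² Cmon a n`. Each of the at
most `jδ` summands with `j < jδ` is bounded by `d j ≤ Crel² a j ≤ Crel² Cmon a n`.
-/

open Finset

theorem sum_Icc_sub_succ_le {D : ℕ → ℝ} (hD : ∀ j, 0 ≤ D j) {m M : ℕ} (hmM : m ≤ M) :
    ∑ j ∈ Icc m M, (D j - D (j + 1)) ≤ D m := by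
  have htel := sum_Icc_sub hmM (fun j ↦ -D j)
  simp only [sub_neg_eq_add, neg_add_eq_sub] at htel
  linarith [hD (M + 1)]

theorem sum_Icc_le_of_telescoping_tail {e D : ℕ → ℝ} {B : ℝ} {k n N : ℕ}
    (hD : ∀ j, 0 ≤ D j) (he : ∀ j, n ≤ j → e j ≤ B) (hDB : ∀ j, n ≤ j → D j ≤ B)
    (htail : ∀ j, k ≤ j → e j ≤ D j - D (j + 1)) :
    ∑ j ∈ Icc n N, e j ≤ (1 + k) * B := by
  have hB : 0 ≤ B := (hD n).trans (hDB n le_rfl)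
  have hhead : ∑ j ∈ (Icc n N).filter (· < k), e j ≤ k * B := by
    have hcard : #((Icc n N).filter (· < k)) ≤ k :=
      (card_le_card fun j hj ↦ mem_range.mpr (mem_filter.mp hj).2).trans_eq (card_range k)
    calc ∑ j ∈ (Icc n N).filter (· < k), e j
        ≤ #((Icc n N).filter (· < k)) • B :=
          sum_le_card_nsmul _ _ _ fun j hj ↦ he j (mem_Icc.mp (mem_filter.mp hj).1).1
      _ ≤ k * B := by
          rw [nsmul_eq_mul]
          exact mul_le_mul_of_nonneg_right (by exact_mod_cast hcard) hB
  have htail_set : (Icc n N).filter (¬ · < k) = Icc (max n k) N := by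
    ext j
    simp only [mem_filter, mem_Icc, not_lt, max_le_iff]
    omega
  have htail_sum : ∑ j ∈ (Icc n N).filter (¬ · < k), e j ≤ B := by
    rw [htail_set]
    rcases le_or_gt (max n k) N with hle | hlt
    · calc ∑ j ∈ Icc (max n k) N, e j
          ≤ ∑ j ∈ Icc (max n k) N, (D j - D (j + 1)) :=
            sum_le_sum fun j hj ↦ htail j (le_of_max_le_right (mem_Icc.mp hj).1)
        _ ≤ D (max n k) := sum_Icc_sub_succ_le hD hle
        _ ≤ B := hDB _ (le_max_left n k)
    · rwa [Icc_eq_empty_of_lt hlt, sum_empty]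
  rw [← sum_filter_add_sum_filter_not (Icc n N) (· < k)]
  linarith

theorem stmt_14_general (a D d : ℕ → ℝ) (ha : ∀ j, 0 ≤ a j) (hD : ∀ j, 0 ≤ D j)
    (δ Crel Cmon : ℝ) (hδ0 : 0 < δ) (hδ1 : δ < 1)
    (jδ : ℕ)
    (h1 : ∀ j ≥ jδ, d j ≤ (1 / (1 - δ)) * D j - D (j + 1))
    (h2 : ∀ j, D j ≤ Crel ^ 2 * a j)
    (h3 : ∀ j, d j ≤ Crel ^ 2 * a j)
    (h4 : ∀ n j : ℕ, n ≤ j → a j ≤ Cmon * a n) :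
    ∀ n N : ℕ, n ≤ N →
      ∑ j ∈ Finset.Icc n N, (d j - Crel ^ 2 * (1 / (1 - δ) - 1) * a j)
        ≤ (1 + (jδ : ℝ)) * Crel ^ 2 * Cmon * a n := by
  intro n N _
  have hgap : 0 ≤ 1 / (1 - δ) - 1 := by
    rw [sub_nonneg, le_div_iff₀ (by linarith)]
    linarith
  have hmon : ∀ j, n ≤ j → Crel ^ 2 * a j ≤ Crel ^ 2 * Cmon * a n := fun j hj ↦ by
    rw [mul_assoc]
    exact mul_le_mul_of_nonneg_left (h4 n j hj) (sq_nonneg Crel)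
  calc _ ≤ (1 + (jδ : ℝ)) * (Crel ^ 2 * Cmon * a n) :=
        sum_Icc_le_of_telescoping_tail hD (fun j hj ↦ ?_)
          (fun j hj ↦ (h2 j).trans (hmon j hj)) (fun j hj ↦ ?_)
    _ = _ := by ring
  · have : 0 ≤ Crel ^ 2 * (1 / (1 - δ) - 1) * a j :=
      mul_nonneg (mul_nonneg (sq_nonneg Crel) hgap) (ha j)
    linarith [h3 j, hmon j hj]
  · have := mul_le_mul_of_nonneg_left (h2 j) hgap
    linarith [h1 j hj]

/-- Verification of the quasi-orthogonality axiom (A3), abstract form (eq. (4.7)). -/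
theorem stmt_14 (a D d : ℕ → ℝ) (ha : ∀ j, 0 ≤ a j) (hD : ∀ j, 0 ≤ D j) (hd : ∀ j, 0 ≤ d j)
    (δ Crel Cmon : ℝ) (hδ0 : 0 < δ) (hδ1 : δ < 1) (hCrel : 0 < Crel) (hCmon : 1 ≤ Cmon)
    (jδ : ℕ)
    (h1 : ∀ j ≥ jδ, d j ≤ (1 / (1 - δ)) * D j - D (j + 1))
    (h2 : ∀ j, D j ≤ Crel ^ 2 * a j)
    (h3 : ∀ j, d j ≤ Crel ^ 2 * a j)
    (h4 : ∀ n j : ℕ, n ≤ j → a j ≤ Cmon * a n) :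
    ∀ n N : ℕ, n ≤ N →
      ∑ j ∈ Finset.Icc n N, (d j - Crel ^ 2 * (1 / (1 - δ) - 1) * a j)
        ≤ (1 + (jδ : ℝ)) * Crel ^ 2 * Cmon * a n :=
  stmt_14_general a D d ha hD δ Crel Cmon hδ0 hδ1 jδ h1 h2 h3 h4
end

section
/- Let $\mathcal X$ be a Hilbert space with a continuous bilinear form $a$ with continuity constant $M$. Let $f,g\in\mathcal X^*$, let $u,z\in\mathcal X$ satisfy $a(u,v)=f(v)$ for all $v\in\mathcal X_0$ (a closed subspace), and $a(v,z)=0$ for all $v\in\mathcal X_0$ with $z$ having prescribed trace, and let $U_\star\in\mathcal X_{0,\star}\subseteq\mathcal X_0$ and $Z_\star$ (with the same prescribed trace data, i.e., $z-Z_\star\in\mathcal X_0$) be Galerkin approximations with $a(U_\star,V)=f(V)$ for all $V\in\mathcal X_{0,\star}$ and $a(V,Z_\star)=0$ for all $V\in\mathcal X_{0,\star}$. Define $N_z(u):=a(u,z)-f(z)$ and $N_{z,\star}(U_\star):=-f(Z_\star)$. Then $|N_z(u)-N_{z,\star}(U_\star)| = |a(u-U_\star, z-Z_\star)| \le M\,\|u-U_\star\|_{\mathcal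 X}\,\|z-Z_\star\|_{\mathcal X}$. -/
section GalerkinFlux

variable {X : Type*} [AddCommGroup X] [Module ℝ X] (a : X →ₗ[ℝ] X →ₗ[ℝ] ℝ)
  {X0 X0s : Submodule ℝ X}

theorem dual_galerkin_orthogonality (hsub : X0s ≤ X0) {z Z : X}
    (hz : ∀ v ∈ X0, a v z = 0) (hZg : ∀ V ∈ X0s, a V Z = 0) {V : X} (hV : V ∈ X0s) :
    a V (z - Z) = 0 := by
  rw [map_sub, hz V (hsub hV), hZg V hV, sub_self]

/-- Since `z - Z ∈ X0`, the primal equation turns `f (z - Z)` into `a u (z - Z)`; dual Galerkin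
orthogonality then lets `u` be replaced by `u - U`. -/
theorem flux_error_eq_neg_apply_sub (f : X →ₗ[ℝ] ℝ) (hsub : X0s ≤ X0) {u z U Z : X}
    (hu0 : u ∈ X0) (hu : ∀ v ∈ X0, a u v = f v) (hz : ∀ v ∈ X0, a v z = 0)
    (hU : U ∈ X0s) (hZtr : z - Z ∈ X0) (hZg : ∀ V ∈ X0s, a V Z = 0) :
    (a u z - f z) - (-(f Z)) = -a (u - U) (z - Z) := by
  have hflux : a (u - U) (z - Z) = f z - f Z := by
    rw [LinearMap.map_sub₂, dual_galerkin_orthogonality a hsub hz hZg hU, sub_zero,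
      hu _ hZtr, map_sub]
  rw [hflux, hz u hu0]
  ring

end GalerkinFlux

theorem stmt_15_general {X : Type*} [NormedAddCommGroup X] [InnerProductSpace ℝ X]
    (a : X →ₗ[ℝ] X →ₗ[ℝ] ℝ) (M : ℝ)
    (hM : ∀ v w : X, |a v w| ≤ M * ‖v‖ * ‖w‖)
    (f : X →ₗ[ℝ] ℝ)
    (X0 X0s : Submodule ℝ X) (hsub : X0s ≤ X0)
    (u z U Z : X) (hu0 : u ∈ X0)
    (hu : ∀ v ∈ X0, a u v = f v) (hz : ∀ v ∈ X0, a v z = 0)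
    (hU : U ∈ X0s) (hZtr : z - Z ∈ X0)
    (hZg : ∀ V ∈ X0s, a V Z = 0) :
    |(a u z - f z) - (-(f Z))| = |a (u - U) (z - Z)| ∧
    |(a u z - f z) - (-(f Z))| ≤ M * ‖u - U‖ * ‖z - Z‖ := by
  rw [flux_error_eq_neg_apply_sub a f hsub hu0 hu hz hU hZtr hZg, abs_neg]
  exact ⟨rfl, hM _ _⟩

/-- Lemma 5.1: error bound for the weighted boundary flux. -/
theorem stmt_15 {X : Type*} [NormedAddCommGroup X] [InnerProductSpace ℝ X] [CompleteSpace X]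
    (a : X →ₗ[ℝ] X →ₗ[ℝ] ℝ) (M : ℝ)
    (hM : ∀ v w : X, |a v w| ≤ M * ‖v‖ * ‖w‖)
    (f : X →ₗ[ℝ] ℝ)
    (X0 X0s : Submodule ℝ X) (hsub : X0s ≤ X0)
    (u z U Z : X) (hu0 : u ∈ X0)
    (hu : ∀ v ∈ X0, a u v = f v) (hz : ∀ v ∈ X0, a v z = 0)
    (hU : U ∈ X0s) (hZtr : z - Z ∈ X0)
    (hUg : ∀ V ∈ X0s, a U V = f V) (hZg : ∀ V ∈ X0s, a V Z = 0) :
    |(a u z - f z) - (-(f Z))| = |a (u - U) (z - Z)| ∧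
    |(a u z - f z) - (-(f Z))| ≤ M * ‖u - U‖ * ‖z - Z‖ :=
  stmt_15_general a M hM f X0 X0s hsub u z U Z hu0 hu hz hU hZtr hZg
end

section
/- Let $\mathcal T_\ell$, $\mathcal T_\star$ be finite sets with $\eta_\ell,\eta_\star$ as in the stability axiom: $|\eta_\star(\mathcal T_\ell\cap\mathcal T_\star)-\eta_\ell(\mathcal T_\ell\cap\mathcal T_\star)|\le C_{\rm stab}\,\delta$, and suppose discrete reliability $\delta \le C_{\rm rel}\,\eta_\ell(\mathcal R)$ holds for a set $\mathcal R\subseteq\mathcal T_\ell$ with $\mathcal T_\ell\setminus\mathcal T_\star\subseteq\mathcal R$, where $\eta(\mathcal U)=(\sum_{T\in\mathcal U}\eta(T)^2)^{1/2}$ and $\delta\ge0$. Let $0<\theta<\theta_\star:=(1+C_{\rm stab}^2C_{\rm rel}^2)^{-1}$ and set $\kappa_\star:=(1-(1+C_{\rm stab}^2C_{\rm rel}^2)\theta)\cdot\lambda$ for suitable $0<\lambda<1$ making $0<\kappa_\star<1$. If $\eta_\star(\mathcal T_\star)^2\le\kappa_\star\,\eta_\ell(\mathcal T_\ell)^2$,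 then the Dörfler marking $\theta\,\eta_\ell(\mathcal T_\ell)^2\le\eta_\ell(\mathcal R)^2$ holds. -/
/-!
Split `η_ℓ(𝒯_ℓ)² = η_ℓ(𝒯_ℓ ∩ 𝒯_⋆)² + η_ℓ(𝒯_ℓ \ 𝒯_⋆)²`. The second part is at most `η_ℓ(ℛ)²`.
Stability and discrete reliability give
`η_ℓ(𝒯_ℓ ∩ 𝒯_⋆) ≤ η_⋆(𝒯_ℓ ∩ 𝒯_⋆) + C_stab C_rel η_ℓ(ℛ)`, which
Young's inequality turns into a bound on squares; the assumed reduction then leaves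
`(1 - (1 + ε) κ_⋆) η_ℓ(𝒯_ℓ)² ≤ (1 + (1 + ε⁻¹) C_stab² C_rel²) η_ℓ(ℛ)²`, and `ε`, `λ` are chosen so
that the ratio of the two weights is exactly `θ`.
-/

open Finset Real

theorem add_sq_le_one_add_mul_sq_add_one_add_inv_mul_sq (x y : ℝ) {ε : ℝ} (hε : 0 < ε) :
    (x + y) ^ 2 ≤ (1 + ε) * x ^ 2 + (1 + ε⁻¹) * y ^ 2 := by
  have hsplit : (1 + ε) * x ^ 2 + (1 + ε⁻¹) * y ^ 2 - (x + y) ^ 2 = ε⁻¹ * (ε * x - y) ^ 2 := by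
    field_simp
    ring
  linarith [mul_nonneg (inv_nonneg.2 hε.le) (sq_nonneg (ε * x - y))]

theorem le_one_add_mul_add_of_sqrt_le_sqrt_add_s19 {a s r q ε : ℝ} (ha : 0 ≤ a) (hs : 0 ≤ s)
    (hr : 0 ≤ r) (hε : 0 < ε) (h : √a ≤ √s + q * √r) :
    a ≤ (1 + ε) * s + (1 + ε⁻¹) * q ^ 2 * r := calc
  a = √a ^ 2 := (sq_sqrt ha).symm
  _ ≤ (√s + q * √r) ^ 2 := pow_le_pow_left₀ (sqrt_nonneg a) h 2
  _ ≤ (1 + ε) * √s ^ 2 + (1 + ε⁻¹) * (q * √r) ^ 2 :=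
    add_sq_le_one_add_mul_sq_add_one_add_inv_mul_sq _ _ hε
  _ = (1 + ε) * s + (1 + ε⁻¹) * q ^ 2 * r := by rw [mul_pow, sq_sqrt hs, sq_sqrt hr, mul_assoc]

theorem one_sub_mul_sum_sq_le_of_reduction {α : Type*} [DecidableEq α] {Tl Ts R : Finset α}
    {ηl ηs : α → ℝ} {q ε κ : ℝ} (hε : 0 < ε) (hR : Tl \ Ts ⊆ R)
    (stab : √(∑ T ∈ Tl ∩ Ts, ηl T ^ 2) ≤ √(∑ T ∈ Tl ∩ Ts, ηs T ^ 2) + q * √(∑ T ∈ R, ηl T ^ 2))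
    (reduction : ∑ T ∈ Ts, ηs T ^ 2 ≤ κ * ∑ T ∈ Tl, ηl T ^ 2) :
    (1 - (1 + ε) * κ) * ∑ T ∈ Tl, ηl T ^ 2 ≤ (1 + (1 + ε⁻¹) * q ^ 2) * ∑ T ∈ R, ηl T ^ 2 := by
  have hkept := le_one_add_mul_add_of_sqrt_le_sqrt_add_s19 (by positivity) (by positivity)
    (by positivity) hε stab
  have hrefined : ∑ T ∈ Tl \ Ts, ηl T ^ 2 ≤ ∑ T ∈ R, ηl T ^ 2 :=
    sum_le_sum_of_subset_of_nonneg hR fun _ _ _ ↦ sq_nonneg _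
  have hinter : ∑ T ∈ Tl ∩ Ts, ηs T ^ 2 ≤ ∑ T ∈ Ts, ηs T ^ 2 :=
    sum_le_sum_of_subset_of_nonneg inter_subset_right fun _ _ _ ↦ sq_nonneg _
  have hreduced := mul_le_mul_of_nonneg_left (hinter.trans reduction) (by positivity : 0 ≤ 1 + ε)
  rw [← sum_inter_add_sum_sdiff Tl Ts] at hreduced ⊢
  linarith

theorem stmt_19_general {α : Type*} [DecidableEq α] (Tl Ts R : Finset α)
    (ηl ηs : α → ℝ)
    (δ Cstab Crel θ : ℝ) (hCs : 0 < Cstab) (hCr : 0 < Crel)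
    (hR1 : Tl \ Ts ⊆ R)
    (stab : |Real.sqrt (∑ T ∈ Tl ∩ Ts, ηs T ^ 2) -
        Real.sqrt (∑ T ∈ Tl ∩ Ts, ηl T ^ 2)| ≤ Cstab * δ)
    (rel : δ ≤ Crel * Real.sqrt (∑ T ∈ R, ηl T ^ 2))
    (hθ0 : 0 < θ) (hθ : θ < (1 + Cstab ^ 2 * Crel ^ 2)⁻¹) :
    ∃ lam : ℝ, 0 < lam ∧ lam < 1 ∧
      (0 < (1 - (1 + Cstab ^ 2 * Crel ^ 2) * θ) * lam ∧
        (1 - (1 + Cstab ^ 2 * Crel ^ 2) * θ) * lam < 1) ∧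
      ((∑ T ∈ Ts, ηs T ^ 2 ≤
          (1 - (1 + Cstab ^ 2 * Crel ^ 2) * θ) * lam * ∑ T ∈ Tl, ηl T ^ 2) →
        θ * ∑ T ∈ Tl, ηl T ^ 2 ≤ ∑ T ∈ R, ηl T ^ 2) := by
  rw [← mul_pow] at hθ ⊢
  set q := Cstab * Crel
  have hq : 0 < q := by positivity
  set c := 1 - (1 + q ^ 2) * θ
  have hc : 0 < c := sub_pos.2 ((lt_inv_mul_iff₀ (by positivity)).1 (by simpa using hθ))
  have hc1 : c ≤ 1 := sub_le_self _ (by positivity)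
  set ε := 2 * θ * q ^ 2 / c
  have hε : 0 < ε := by positivity
  set lam := (2 * (1 + ε))⁻¹
  have hlam1 : lam < 1 := inv_lt_one_of_one_lt₀ (by linarith)
  refine ⟨lam, by positivity, hlam1, ⟨by positivity, by nlinarith⟩, fun hred ↦ ?_⟩
  have hstab : √(∑ T ∈ Tl ∩ Ts, ηl T ^ 2) ≤
      √(∑ T ∈ Tl ∩ Ts, ηs T ^ 2) + q * √(∑ T ∈ R, ηl T ^ 2) := by
    have hδ := mul_le_mul_of_nonneg_left rel hCs.le
    linarith [(abs_le.1 stab).1]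
  have hbound := one_sub_mul_sum_sq_le_of_reduction hε hR1 hstab hred
  -- `ε` and `lam` are chosen so that both sides equal `1 - c / 2`
  have hweights : θ * (1 + (1 + ε⁻¹) * q ^ 2) = 1 - (1 + ε) * (c * lam) := by
    have hlam : (1 + ε) * lam = 2⁻¹ := by simp only [lam]; field_simp
    have hεinv : θ * q ^ 2 * ε⁻¹ = c / 2 := by simp only [ε]; field_simp
    linear_combination hεinv + c * hlam
  rw [← hweights, mul_comm θ, mul_assoc] at hbound
  exact le_of_mul_le_mul_left hbound (by positivity)

/-- Optimality of the Dörfler marking (Lemma 2.15). -/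
theorem stmt_19 {α : Type*} [DecidableEq α] (Tl Ts R : Finset α)
    (ηl ηs : α → ℝ) (hηl : ∀ T, 0 ≤ ηl T) (hηs : ∀ T, 0 ≤ ηs T)
    (δ Cstab Crel θ : ℝ) (hδ : 0 ≤ δ) (hCs : 0 < Cstab) (hCr : 0 < Crel)
    (hR1 : Tl \ Ts ⊆ R) (hR2 : R ⊆ Tl)
    (stab : |Real.sqrt (∑ T ∈ Tl ∩ Ts, ηs T ^ 2) -
        Real.sqrt (∑ T ∈ Tl ∩ Ts, ηl T ^ 2)| ≤ Cstab * δ)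
    (rel : δ ≤ Crel * Real.sqrt (∑ T ∈ R, ηl T ^ 2))
    (hθ0 : 0 < θ) (hθ : θ < (1 + Cstab ^ 2 * Crel ^ 2)⁻¹) :
    ∃ lam : ℝ, 0 < lam ∧ lam < 1 ∧
      (0 < (1 - (1 + Cstab ^ 2 * Crel ^ 2) * θ) * lam ∧
        (1 - (1 + Cstab ^ 2 * Crel ^ 2) * θ) * lam < 1) ∧
      ((∑ T ∈ Ts, ηs T ^ 2 ≤
          (1 - (1 + Cstab ^ 2 * Crel ^ 2) * θ) * lam * ∑ T ∈ Tl, ηl T ^ 2) →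
        θ * ∑ T ∈ Tl, ηl T ^ 2 ≤ ∑ T ∈ R, ηl T ^ 2) :=
  stmt_19_general Tl Ts R ηl ηs δ Cstab Crel θ hCs hCr hR1 stab rel hθ0 hθ
end
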